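/- arXiv:math/9908011 — 5 statements merged into one kernel-verified Lean document; each statement's English description precedes it below -/
import Mathlib

section
/- Each element of the set W^{(r)} of minimal-length right coset representatives of W(B_{r-1}) in W(B_r) has a unique reduced expression. -/
/-!
Let `J` be the set of simple reflections of index `≠ 0`. If `w` has no left descent in `J`, neither
has any prefix of a reduced word of `w`, so it suffices to show by induction on `m` that such an
element of length `m` is the product `u m` of the first `m` letters of `0 1 ⋯ (r-1) (r-2) ⋯ 1 0`
and that `u m * σ i` of length `m + 1` without left descents in `J` forces `i` to be the next
letter. The letter `i` is not the last letter `d` of `u m`, and it does not commute with `σ d`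
(otherwise it could be moved in front of `d`, against the induction hypothesis). Of the two
neighbours of `d`, the one that is not the next letter satisfies `u m * σ i = σ j * u m` for some
`j ∈ J`, by the braid relations, so that `σ j` would be a left descent of `u m * σ i`.
-/

open CoxeterSystem LaurentPolynomial

noncomputable section

/-- The Laurent polynomial ring `A = ℤ[v, v⁻¹]`, with `v = T 1`. -/
abbrev LA := LaurentPolynomial ℤ

/-- `q_c = v + v⁻¹`. -/
def qc : LA := T 1 + T (-1)

/-- The subring `A⁻ = ℤ[v⁻¹]` of `A`. -/
def LAminus : Subring LA := Subring.closure {T (-1)}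

variable {B : Type*} {W : Type*} [Group W]

/-- `w` is complex: it has a reduced factorization `x₁ * w_{ss'} * x₂`, where `w_{ss'}` is the
longest element of a finite rank-2 parabolic subgroup `⟨s, s'⟩` with `s`, `s'` non-commuting
(`3 ≤ M i i'`, which also excludes infinite bonds `M i i' = 0`). -/
def CoxeterSystem.IsComplexElt {M : CoxeterMatrix B} (cs : CoxeterSystem M W) (w : W) : Prop :=
  ∃ (x₁ x₂ : W) (i i' : B), 3 ≤ M i i' ∧
    w = x₁ * cs.wordProd (CoxeterSystem.braidWord M i i') * x₂ ∧
    cs.length w = cs.length x₁ + M i i' + cs.length x₂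

/-- `w` is fully commutative, i.e. not complex; `cs.FC` plays the role of the set `W_c`. -/
def CoxeterSystem.FC {M : CoxeterMatrix B} (cs : CoxeterSystem M W) (w : W) : Prop :=
  ¬ cs.IsComplexElt w

/-- Bruhat--Chevalley order, via the subword characterization. -/
def CoxeterSystem.BruhatLE {M : CoxeterMatrix B} (cs : CoxeterSystem M W) (x w : W) : Prop :=
  ∃ ω : List B, cs.IsReduced ω ∧ cs.wordProd ω = w ∧
    ∃ κ : List B, κ.Sublist ω ∧ cs.wordProd κ = x

theorem Fin.val_ofNat_of_lt {n a : ℕ} [NeZero n] (h : a < n) : (Fin.ofNat n a : ℕ) = a :=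
  Nat.mod_eq_of_lt h

namespace CoxeterSystem

variable {M : CoxeterMatrix B} (cs : CoxeterSystem M W)

local prefix:100 "s " => cs.simple
local prefix:100 "π " => cs.wordProd
local prefix:100 "ℓ " => cs.length

theorem commute_simple_of_M_eq_two {i j : B} (h : M i j = 2) : Commute (s i) (s j) := by
  have e := cs.simple_mul_simple_pow i j
  rwa [h, pow_two, mul_eq_one_iff_eq_inv, mul_inv_rev, inv_simple, inv_simple] at e

theorem simple_braid_of_M_eq_three {i j : B} (h : M i j = 3) :
    s i * s j * s i = s j * s i * s j := by
  simpa [braidWord, h, M.symmetric i j ▸ h, alternatingWord, wordProd, mul_assoc] using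
    (cs.wordProd_braidWord_eq i j).symm

theorem simple_braid_of_M_eq_four {i j : B} (h : M i j = 4) :
    s i * s j * s i * s j = s j * s i * s j * s i := by
  simpa [braidWord, h, M.symmetric i j ▸ h, alternatingWord, wordProd, mul_assoc] using
    cs.wordProd_braidWord_eq i j

theorem length_mul_simple_le (w : W) (i : B) : ℓ (w * s i) ≤ ℓ w + 1 :=
  cs.length_simple i ▸ cs.length_mul_le w (s i)

theorem commute_wordProd {x : W} {ω : List B} (h : ∀ i ∈ ω, Commute x (s i)) :
    Commute x (π ω) :=
  Commute.list_prod_right _ _ (by simpa using h)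

/-- `w` is the element of minimal length in its coset `W_J w`. -/
def LeftDescentFree (J : Set B) (w : W) : Prop := ∀ i ∈ J, ¬ cs.IsLeftDescent w i

variable {cs}

theorem LeftDescentFree.of_mul {J : Set B} {w v : W} (hl : ℓ (w * v) = ℓ w + ℓ v)
    (h : cs.LeftDescentFree J (w * v)) : cs.LeftDescentFree J w := fun i hi hw => h i hi <|
  calc ℓ (s i * (w * v)) ≤ ℓ (s i * w) + ℓ v := mul_assoc (s i) w v ▸ cs.length_mul_le _ _
    _ < ℓ w + ℓ v := Nat.add_lt_add_right hw _
    _ = ℓ (w * v) := hl.symm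

theorem LeftDescentFree.of_mul_simple {J : Set B} {x : W} {i : B} {n : ℕ} (hx : ℓ x ≤ n)
    (hl : ℓ (x * s i) = n + 1) (h : cs.LeftDescentFree J (x * s i)) :
    ℓ x = n ∧ cs.LeftDescentFree J x := by
  have hx' : ℓ x = n := by have := cs.length_mul_simple_le x i; omega
  exact ⟨hx', h.of_mul (by rw [hl, hx', length_simple])⟩

theorem LeftDescentFree.not_semiconjBy {J : Set B} {u : W} {i j : B} (hj : j ∈ J)
    (hl : ℓ (u * s i) = ℓ u + 1) (h : cs.LeftDescentFree J (u * s i)) :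
    ¬ SemiconjBy u (s i) (s j) := fun hconj => h j hj <| by
  show ℓ (s j * (u * s i)) < ℓ (u * s i)
  rw [hconj.eq, ← mul_assoc, simple_mul_simple_self, one_mul, ← hconj.eq, hl]
  exact Nat.lt_succ_self _

end CoxeterSystem

namespace CoxeterMatrix

theorem B_apply_eq_two {n : ℕ} {i j : Fin n} (hij : i ≠ j) (hi : (i : ℕ) + 1 ≠ j)
    (hj : (j : ℕ) + 1 ≠ i) : CoxeterMatrix.B n i j = 2 := by
  simp only [CoxeterMatrix.B, Matrix.of_apply]
  rw [if_neg hij, if_neg (by omega), if_neg (by omega)]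

theorem B_apply_eq_three {n : ℕ} {i j : Fin n} (h : (i : ℕ) + 1 = j) (hj : (j : ℕ) + 1 < n) :
    CoxeterMatrix.B n i j = 3 := by
  simp only [CoxeterMatrix.B, Matrix.of_apply]
  rw [if_neg (by simp [Fin.ext_iff]; omega), if_neg (by omega), if_pos (by omega)]

theorem B_apply_eq_four {n : ℕ} {i j : Fin n} (h : (i : ℕ) + 1 = j) (hj : (j : ℕ) + 1 = n) :
    CoxeterMatrix.B n i j = 4 := by
  simp only [CoxeterMatrix.B, Matrix.of_apply]
  rw [if_neg (by simp [Fin.ext_iff]; omega), if_pos (by omega)]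

end CoxeterMatrix

namespace CoxeterSystem

variable {r : ℕ} [NeZero r] (cs : CoxeterSystem (CoxeterMatrix.B r) W)

local prefix:100 "s " => cs.simple
local prefix:100 "π " => cs.wordProd
local prefix:100 "ℓ " => cs.length
local notation "σ" k:max => cs.simple (Fin.ofNat r k)

/-- The `k`-th letter of the word `0 1 ⋯ (r-1) (r-2) ⋯ 1 0`; beyond its last letter `k = 2r-2`
the value is junk (truncated subtraction). -/
def chainIdx (r k : ℕ) : ℕ := if k < r then k else 2 * r - 2 - k

def chainWord (r : ℕ) [NeZero r] (m : ℕ) : List (Fin r) :=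
  (List.range m).map fun k => Fin.ofNat r (chainIdx r k)

def segment (a n : ℕ) : W := π ((List.range' a n).map (Fin.ofNat r))

theorem chainIdx_lt (k : ℕ) : chainIdx r k < r := by
  have := NeZero.pos r
  unfold chainIdx; split <;> omega

theorem chainWord_succ (m : ℕ) :
    chainWord r (m + 1) = chainWord r m ++ [Fin.ofNat r (chainIdx r m)] := by
  simp [chainWord, List.range_succ]

theorem chainWord_length (m : ℕ) : (chainWord r m).length = m := by
  simp [chainWord]

theorem length_wordProd_chainWord_le (m : ℕ) : ℓ (π (chainWord r m)) ≤ m :=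
  (cs.length_wordProd_le _).trans (chainWord_length m).le

theorem segment_add (a n₁ n₂ : ℕ) :
    cs.segment a (n₁ + n₂) = cs.segment a n₁ * cs.segment (a + n₁) n₂ := by
  rw [segment, segment, segment, ← wordProd_append, ← List.map_append, List.range'_append_1]

theorem segment_one (a : ℕ) : cs.segment a 1 = σ a := by
  simp [segment]

theorem segment_two (a : ℕ) : cs.segment a 2 = σ a * σ (a + 1) := by
  rw [segment_add cs a 1 1, segment_one, segment_one]

theorem commute_segment {a n j : ℕ} (hr : a + n ≤ r) (hj : j < r) (h : a + n < j ∨ j + 1 < a) :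
    Commute (σ j) (cs.segment a n) := by
  refine cs.commute_wordProd fun i hi => cs.commute_simple_of_M_eq_two ?_
  obtain ⟨k, hk, rfl⟩ := List.mem_map.mp hi
  rw [List.mem_range'_1] at hk
  have hk' : (Fin.ofNat r k : ℕ) = k := Fin.val_ofNat_of_lt (by omega)
  have hj' : (Fin.ofNat r j : ℕ) = j := Fin.val_ofNat_of_lt hj
  exact CoxeterMatrix.B_apply_eq_two (fun e => by have := congrArg Fin.val e; omega)
    (by omega) (by omega)

theorem semiconjBy_segment {a n b : ℕ} (hab : a ≤ b) (hbn : b + 2 ≤ a + n) (hr : a + n ≤ r)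
    (hb : b + 3 ≤ r) : SemiconjBy (cs.segment a n) (σ b) (σ (b + 1)) := by
  obtain ⟨p, rfl⟩ : ∃ p, b = a + p := ⟨b - a, by omega⟩
  obtain ⟨q, rfl⟩ : ∃ q, n = p + 2 + q := ⟨n - p - 2, by omega⟩
  rw [segment_add, segment_add, segment_two]
  have hbraid : SemiconjBy (σ (a + p) * σ (a + p + 1)) (σ (a + p)) (σ (a + p + 1)) := by
    have hB := CoxeterMatrix.B_apply_eq_three (n := r) (i := Fin.ofNat r (a + p))
      (j := Fin.ofNat r (a + p + 1))
      (by rw [Fin.val_ofNat_of_lt (by omega), Fin.val_ofNat_of_lt (by omega)])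
      (by rw [Fin.val_ofNat_of_lt (by omega)]; omega)
    simpa only [SemiconjBy, mul_assoc] using cs.simple_braid_of_M_eq_three hB
  refine SemiconjBy.mul_left (SemiconjBy.mul_left ?_ hbraid) ?_
  · exact (cs.commute_segment (by omega) (by omega) (by omega)).symm
  · exact (cs.commute_segment (by omega) (by omega) (by omega)).symm

theorem wordProd_chainWord_of_le {m : ℕ} (hm : m ≤ r) : π (chainWord r m) = cs.segment 0 m := by
  rw [chainWord, segment, List.range_eq_range']
  congr 1
  refine List.map_congr_left fun k hk => ?_
  rw [List.mem_range'_1] at hk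
  rw [chainIdx, if_pos (by omega)]

theorem wordProd_chainWord_add {t : ℕ} (ht : t < r) :
    π (chainWord r (r + t)) = cs.segment 0 r * (cs.segment (r - 1 - t) t)⁻¹ := by
  induction t with
  | zero => simp [segment, wordProd_chainWord_of_le]
  | succ t ih =>
    have hidx : chainIdx r (r + t) = r - 1 - (t + 1) := by rw [chainIdx, if_neg (by omega)]; omega
    rw [← add_assoc, chainWord_succ, wordProd_append, wordProd_singleton, ih (by omega), hidx,
      add_comm t 1, segment_add, segment_one, mul_inv_rev, inv_simple, mul_assoc,
      show r - 1 - (1 + t) + 1 = r - 1 - t by omega]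

theorem commute_wordProd_chainWord {t : ℕ} (h1 : 1 ≤ t) (ht : t < r) :
    Commute (σ (r - t)) (π (chainWord r (r + t))) := by
  rw [wordProd_chainWord_add cs ht]
  rcases h1.eq_or_lt with rfl | h2
  · have hsplit : cs.segment 0 r = cs.segment 0 (r - 2) * (σ (r - 2) * σ (r - 1)) := by
      have := cs.segment_add 0 (r - 2) 2
      rwa [zero_add, segment_two, show r - 2 + 2 = r by omega,
        show r - 2 + 1 = r - 1 by omega] at this
    have hB := CoxeterMatrix.B_apply_eq_four (n := r) (i := Fin.ofNat r (r - 2))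
      (j := Fin.ofNat r (r - 1))
      (by rw [Fin.val_ofNat_of_lt (by omega), Fin.val_ofNat_of_lt (by omega)]; omega)
      (by rw [Fin.val_ofNat_of_lt (by omega)]; omega)
    have hbraid := cs.simple_braid_of_M_eq_four hB
    rw [hsplit, segment_one, inv_simple, mul_assoc]
    refine Commute.mul_right (cs.commute_segment (by omega) (by omega) (by omega)) ?_
    simp only [Commute, SemiconjBy, ← mul_assoc]
    exact hbraid.symm
  · have hS := cs.semiconjBy_segment (a := 0) (n := r) (b := r - 1 - t) (by omega) (by omega)
      (by omega) (by omega)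
    have hX := cs.semiconjBy_segment (a := r - 1 - t) (n := t) (b := r - 1 - t) le_rfl (by omega)
      (by omega) (by omega)
    rw [show r - 1 - t + 1 = r - t by omega] at hS hX
    exact (hS.mul_left hX.inv_symm_left).symm

theorem chainIdx_succ_of_adjacent {m : ℕ} {i : Fin r} (hm : m + 1 < 2 * r)
    (hadj : (i : ℕ) = chainIdx r m + 1 ∨ (i : ℕ) + 1 = chainIdx r m)
    (hnot : ∀ j : Fin r, j ≠ 0 → ¬ SemiconjBy (π (chainWord r (m + 1))) (s i) (s j)) :
    m + 2 < 2 * r ∧ (i : ℕ) = chainIdx r (m + 1) := by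
  rcases lt_trichotomy (m + 1) r with hlt | hturn | hgt
  · have hd : chainIdx r m = m := if_pos (by omega)
    rcases hadj with h | h
    · exact ⟨by omega, by rw [chainIdx, if_pos hlt]; omega⟩
    · refine absurd ?_ (hnot (Fin.ofNat r m) (Fin.val_ne_zero_iff.mp ?_))
      · have hconj := cs.semiconjBy_segment (a := 0) (n := m + 1) (b := i) (by omega)
          (by omega) (by omega) (by omega)
        rwa [Fin.ofNat_val_eq_self, show (i : ℕ) + 1 = m by omega,
          ← wordProd_chainWord_of_le cs hlt.le] at hconj
      · rw [Fin.val_ofNat_of_lt (by omega)]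
        omega
  · have hd : chainIdx r m = m := if_pos (by omega)
    rcases hadj with h | h
    · have := i.isLt
      omega
    · exact ⟨by omega, by rw [chainIdx, if_neg (by omega)]; omega⟩
  · have hd : chainIdx r m = 2 * r - 2 - m := if_neg (by omega)
    rcases hadj with h | h
    · refine absurd ?_ (hnot i (Fin.val_ne_zero_iff.mp (by omega)))
      have hcomm := cs.commute_wordProd_chainWord (t := m + 1 - r) (by omega) (by omega)
      rw [show r + (m + 1 - r) = m + 1 by omega, show r - (m + 1 - r) = i by omega,
        Fin.ofNat_val_eq_self] at hcomm
      exact hcomm.symm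
    · exact ⟨by omega, by rw [chainIdx, if_neg (by omega)]; omega⟩

theorem chainIdx_eq_of_leftDescentFree (m : ℕ) (i : Fin r)
    (hl : ℓ (π (chainWord r m) * s i) = m + 1)
    (hJ : cs.LeftDescentFree {0}ᶜ (π (chainWord r m) * s i)) :
    m + 1 < 2 * r ∧ (i : ℕ) = chainIdx r m := by
  induction m generalizing i with
  | zero =>
    have hi : i = 0 := by
      by_contra hi
      exact hJ i hi (by simp [chainWord, IsLeftDescent])
    have := NeZero.pos r
    subst hi
    simp [chainIdx, this]
    omega
  | succ m ih =>
    set d := chainIdx r m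
    have hud : π (chainWord r (m + 1)) = π (chainWord r m) * σ d := by
      rw [chainWord_succ, wordProd_append, wordProd_singleton]
    have hdr : (Fin.ofNat r d : ℕ) = d := Fin.val_ofNat_of_lt (chainIdx_lt m)
    obtain ⟨hlu, hJu⟩ := LeftDescentFree.of_mul_simple (cs.length_wordProd_chainWord_le _) hl hJ
    have hbound : m + 1 < 2 * r := by
      rw [hud] at hlu hJu
      exact (ih _ hlu hJu).1
    have hid : (i : ℕ) ≠ d := fun h => by
      rw [hud, show i = Fin.ofNat r d from Fin.ext (h.trans hdr.symm),
        simple_mul_simple_cancel_right] at hl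
      have := cs.length_wordProd_chainWord_le m
      omega
    -- if `σ i` commuted with `σ d`, it could be moved in front of `σ d`, contradicting `ih`
    have hadj : (i : ℕ) = d + 1 ∨ (i : ℕ) + 1 = d := by
      by_contra! hna
      have hcomm := cs.commute_simple_of_M_eq_two (CoxeterMatrix.B_apply_eq_two
        (i := Fin.ofNat r d) (j := i) (fun h => hid (by rw [← h, hdr])) (by omega) (by omega))
      rw [hud, mul_assoc, hcomm.eq, ← mul_assoc] at hl hJ
      have := cs.length_mul_simple_le (π (chainWord r m)) i
      have := cs.length_wordProd_chainWord_le m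
      obtain ⟨hl', hJ'⟩ := LeftDescentFree.of_mul_simple (by omega) hl hJ
      exact hid (ih i hl' hJ').2
    exact cs.chainIdx_succ_of_adjacent hbound hadj
      fun j hj => hJ.not_semiconjBy hj (by rw [hl, hlu])

theorem eq_chainWord_of_leftDescentFree {ω : List (Fin r)} (hω : cs.IsReduced ω)
    (hJ : cs.LeftDescentFree {0}ᶜ (π ω)) : ω = chainWord r ω.length := by
  induction ω using List.reverseRecOn with
  | nil => rfl
  | append_singleton ω i ih =>
    have hl : ℓ (π ω * s i) = ω.length + 1 := by
      simpa [IsReduced, wordProd_append] using hω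
    rw [wordProd_append, wordProd_singleton] at hJ
    obtain ⟨hred, hJω⟩ := LeftDescentFree.of_mul_simple (cs.length_wordProd_le ω) hl hJ
    have hω' := ih hred hJω
    rw [hω'] at hl hJ
    have hi := (cs.chainIdx_eq_of_leftDescentFree _ i (by rwa [chainWord_length] at hl) hJ).2
    rw [List.length_append, List.length_singleton, chainWord_succ, ← hω', ← hi,
      Fin.ofNat_val_eq_self]

end CoxeterSystem

/-- In the indexing of `CoxeterMatrix.Bₙ r`, the parabolic subgroup `W(B_{r-1})` is generated by
the simple reflections of index `≠ 0`. -/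
theorem unique_reduced_word_of_coset_rep_typeB (r : ℕ) [NeZero r]
    (cs : CoxeterSystem (CoxeterMatrix.Bₙ r) W) (w : W)
    (hw : ∀ i : Fin r, i ≠ 0 → cs.length w < cs.length (cs.simple i * w))
    (ω ω' : List (Fin r)) (hω : cs.IsReduced ω) (hωw : cs.wordProd ω = w)
    (hω' : cs.IsReduced ω') (hω'w : cs.wordProd ω' = w) :
    ω = ω' := by
  have hJ : cs.LeftDescentFree {0}ᶜ w := fun i hi => (hw i hi).not_gt
  have hlen : ω.length = ω'.length := by rw [← hω.eq, ← hω'.eq, hωw, hω'w]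
  rw [cs.eq_chainWord_of_leftDescentFree hω (hωw ▸ hJ),
    cs.eq_chainWord_of_leftDescentFree hω' (hω'w ▸ hJ), hlen]
end
end

section
/- Let X be any Coxeter graph. If the kernel of the quotient map θ : H(X) → TL(X) is spanned as an A-module by the Kazhdan–Lusztig basis elements C'_w that it contains, then θ(C'_w) = c_w for all w ∈ W_c, i.e., X has the projection property. -/
open CoxeterSystem LaurentPolynomial

noncomputable section

variable {B : Type*} {W : Type*} [Group W]

/-- Data of the Hecke algebra of `cs`: a free `A`-module with basis `{T_w}` (here `q = v² = T 2`)
satisfying the defining multiplication rules. -/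
structure HeckeData {M : CoxeterMatrix B} (cs : CoxeterSystem M W)
    (H : Type*) [Ring H] [Algebra LA H] where
  Tb : Module.Basis W LA H
  Tb_one : (Tb 1 : H) = 1
  Tb_mul_of_lt : ∀ (i : B) (w : W), cs.length w < cs.length (cs.simple i * w) →
    Tb (cs.simple i) * Tb w = Tb (cs.simple i * w)
  Tb_mul_of_gt : ∀ (i : B) (w : W), cs.length (cs.simple i * w) < cs.length w →
    Tb (cs.simple i) * Tb w = (T 2 : LA) • Tb (cs.simple i * w) + ((T 2 - 1 : LA)) • Tb w

/-- The underlying set of the rank-2 parabolic subgroup `⟨s_i, s_{i'}⟩` (with `M i i'` finite),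
as a finset: all products of alternating words. -/
def dihedralFinset [DecidableEq W] {M : CoxeterMatrix B} (cs : CoxeterSystem M W)
    (i i' : B) : Finset W :=
  (Finset.range (M i i' + 1)).image (fun k => cs.wordProd (CoxeterSystem.alternatingWord i i' k)) ∪
  (Finset.range (M i i' + 1)).image (fun k => cs.wordProd (CoxeterSystem.alternatingWord i' i k))

/-- The generators `Σ_{w ∈ ⟨s,s'⟩} T_w` (over adjacent pairs `(s, s')`, i.e. `3 ≤ M i i'`,
omitting infinite bonds) of the two-sided ideal `J(X)`. -/
def heckeJGens [DecidableEq W] {M : CoxeterMatrix B} {cs : CoxeterSystem M W}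
    {H : Type*} [Ring H] [Algebra LA H] (hd : HeckeData cs H) : Set H :=
  {x | ∃ i i' : B, 3 ≤ M i i' ∧ x = ∑ u ∈ dihedralFinset cs i i', hd.Tb u}

/-- The set `{v^{-ℓ(u)} t_u : u ∈ W_c}` in `TL(X)`, where `t_u = θ(T_u)`. -/
def lattSet {M : CoxeterMatrix B} (cs : CoxeterSystem M W) {H : Type*} [Ring H] [Algebra LA H]
    (hd : HeckeData cs H) {Q : Type*} [Ring Q] [Algebra LA Q] (θ : H →ₐ[LA] Q) : Set Q :=
  {y | ∃ u : W, cs.FC u ∧ y = ((T (-1) : LA) ^ cs.length u) • θ (hd.Tb u)}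

/-- The `A⁻`-lattice `L` spanned by `{v^{-ℓ(u)} t_u : u ∈ W_c}`. -/
def latt {M : CoxeterMatrix B} (cs : CoxeterSystem M W) {H : Type*} [Ring H] [Algebra LA H]
    (hd : HeckeData cs H) {Q : Type*} [Ring Q] [Algebra LA Q] (θ : H →ₐ[LA] Q) :
    Submodule LAminus Q :=
  Submodule.span LAminus (lattSet cs hd θ)

/-- The sublattice `v⁻¹L`, spanned by `{v^{-ℓ(u)-1} t_u : u ∈ W_c}`. -/
def vinvLatt {M : CoxeterMatrix B} (cs : CoxeterSystem M W) {H : Type*} [Ring H] [Algebra LA H]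
    (hd : HeckeData cs H) {Q : Type*} [Ring Q] [Algebra LA Q] (θ : H →ₐ[LA] Q) :
    Submodule LAminus Q :=
  Submodule.span LAminus
    {y | ∃ u : W, cs.FC u ∧ y = ((T (-1) : LA) ^ (cs.length u + 1)) • θ (hd.Tb u)}

/-!
Unitriangularity of `C'_w` with respect to `v^{-ℓ(x)} T_x` shows that the `C'_w` are linearly
independent and that `θ(C'_w) - c_w` lies in the `A⁻`-span of the `v⁻¹ θ(C'_y)`, say
`θ(C'_w) - c_w = θ(Σ b_y C'_y)` with `b_y ∈ v⁻¹ℤ[v⁻¹]`. Both `θ(C'_w)` and `c_w` are bar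
invariant, so `Σ (b_y - b̄_y) C'_y ∈ ker θ`. As `ker θ` is spanned by the `C'_y` it contains,
independence gives `b_y = b̄_y` whenever `θ(C'_y) ≠ 0`, and a bar-invariant element of
`v⁻¹ℤ[v⁻¹]` is zero.
-/
open Finsupp

namespace LaurentPolynomial

theorem coeff_toLaurent_of_neg {R : Type*} [Semiring R] (p : Polynomial R) {n : ℤ} (hn : n < 0) :
    (Polynomial.toLaurent p).coeff n = 0 := by
  rw [coeff_toLaurent]
  exact mapDomain_of_notMem_range _ _ fun ⟨k, hk⟩ => by simp at hk; omega

theorem coeff_eq_zero_of_mem_LAminus {f : LA} (hf : f ∈ LAminus) {n : ℤ} (hn : 0 < n) :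
    f.coeff n = 0 := by
  have hle : LAminus ≤ ((invert : LA ≃ₐ[ℤ] LA).toRingHom.comp Polynomial.toLaurent).range :=
    Subring.closure_le.mpr <| Set.singleton_subset_iff.mpr ⟨Polynomial.X, by simp⟩
  obtain ⟨p, rfl⟩ := hle hf
  simpa using coeff_toLaurent_of_neg p (neg_neg_of_pos hn)

theorem eq_zero_of_invert_eq_self {R : Type*} [CommSemiring R] {p : R[T;T⁻¹]}
    (hp : ∀ n, 0 ≤ n → p.coeff n = 0) (h : invert p = p) : p = 0 := by
  ext n
  rcases le_or_gt 0 n with hn | hn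
  · simpa using hp n hn
  · rw [← h, invert_apply]
    simpa using hp (-n) (by omega)

theorem T_neg_one_mul_eq_zero_of_invert_eq_self {p : LA} (hp : p ∈ LAminus)
    (h : invert (T (-1) * p) = T (-1) * p) : T (-1) * p = 0 := by
  refine eq_zero_of_invert_eq_self (fun n hn => ?_) h
  have : (T (-1) * p).coeff n = p.coeff (n + 1) := by
    rw [T, AddMonoidAlgebra.coeff_single_mul_apply, one_mul, neg_neg, add_comm]
  rw [this]
  exact coeff_eq_zero_of_mem_LAminus hp (by omega)

end LaurentPolynomial

theorem CoxeterSystem.BruhatLE.length_lt {M : CoxeterMatrix B} {cs : CoxeterSystem M W} {x w : W}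
    (h : cs.BruhatLE x w) (hne : x ≠ w) : cs.length x < cs.length w := by
  obtain ⟨ω, hred, rfl, κ, hsub, rfl⟩ := h
  refine lt_of_le_of_ne ((cs.length_wordProd_le κ).trans (hred ▸ hsub.length_le)) fun heq => ?_
  have hlen : κ.length = ω.length :=
    le_antisymm hsub.length_le (hred ▸ heq ▸ cs.length_wordProd_le κ)
  exact hne (by rw [hsub.eq_of_length hlen])

section Unitriangular

variable {ι R M : Type*} [CommRing R] [AddCommGroup M] [Module R M]
  {ℓ : ι → ℕ} {C : ι → M} {P : ι → ι →₀ R}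

theorem sub_mem_span_smul_of_unitriangular (S : Subring R) {ε : R} (hε : ε ∈ S) {e : ι → M}
    (hdiag : ∀ w, P w w = 1) (hsupp : ∀ w x, P w x ≠ 0 → x ≠ w → ℓ x < ℓ w)
    (hoff : ∀ w x, x ≠ w → ∃ p ∈ S, P w x = ε * p)
    (hC : ∀ w, C w = linearCombination R e (P w)) (u : ι) :
    e u - C u ∈ Submodule.span S (Set.range fun y => ε • C y) := by
  classical
  set N := Submodule.span S (Set.range fun y => ε • C y)
  induction hu : ℓ u using Nat.strong_induction_on generalizing u with
  | _ n ih =>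
    have hsplit : e u - C u = -linearCombination R e ((P u).erase u) := by
      conv_lhs => rw [hC]; enter [2, 2]; rw [← single_add_erase u (P u)]
      rw [map_add, linearCombination_single, hdiag, one_smul]
      abel
    rw [hsplit, linearCombination_apply]
    refine N.neg_mem (N.sum_mem fun x hx => ?_)
    obtain ⟨hxu, hx⟩ := Finset.mem_erase.mp ((support_erase (a := u) (f := P u)) ▸ hx)
    rw [erase_ne hxu]
    show P u x • e x ∈ N
    obtain ⟨p, hp, hPx⟩ := hoff u x hxu
    have hlt : ℓ x < n := hu ▸ hsupp u x (mem_support_iff.mp hx) hxu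
    have hterm : P u x • e x = p • (ε • C x) + P u x • (e x - C x) := by
      rw [smul_sub, hPx, smul_smul, mul_comm]
      abel
    rw [hterm]
    exact N.add_mem (N.smul_mem ⟨p, hp⟩ (Submodule.subset_span ⟨x, rfl⟩))
      (N.smul_mem ⟨P u x, hPx ▸ mul_mem hε hp⟩ (ih _ hlt x rfl))

theorem linearIndependent_of_unitriangular (b : Module.Basis ι R M)
    (hdiag : ∀ w, P w w = 1) (hsupp : ∀ w x, P w x ≠ 0 → x ≠ w → ℓ x < ℓ w)
    (hC : ∀ w, C w = linearCombination R b (P w)) : LinearIndependent R C := by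
  rw [linearIndependent_iff]
  intro g hg
  by_contra hne
  obtain ⟨y₀, hy₀, hmax⟩ := g.support.exists_max_image ℓ (support_nonempty_iff.mpr hne)
  have hrepr : b.repr (linearCombination R C g) y₀ = g y₀ := by
    simp only [linearCombination_apply, map_finsuppSum, map_smul, hC]
    rw [Finsupp.sum, Finset.sum_apply', Finset.sum_eq_single_of_mem y₀ hy₀]
    · simp [hdiag]
    · intro y hy hne
      by_contra hP
      have := hmax y hy
      have := hsupp y y₀ (by simpa using right_ne_zero_of_smul hP) hne.symm
      omega
  exact mem_support_iff.mp hy₀ (by rw [← hrepr, hg, map_zero, Finsupp.zero_apply])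

end Unitriangular

theorem LinearIndependent.mem_supported_of_linearCombination_mem_span_image {ι R M : Type*}
    [Ring R] [AddCommGroup M] [Module R M] {v : ι → M} (hv : LinearIndependent R v)
    {s : Set ι} {f : ι →₀ R} (h : linearCombination R v f ∈ Submodule.span R (v '' s)) :
    f ∈ supported R R s := by
  obtain ⟨l, hl, hlf⟩ := (mem_span_image_iff_linearCombination R).mp h
  exact hv.finsuppLinearCombination_injective hlf ▸ hl

theorem exists_linearCombination_eq_of_mem_span_smul_range {ι R M : Type*} [CommRing R]
    [AddCommGroup M] [Module R M] (S : Subring R) {ε : R} {v : ι → M} {z : M}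
    (hz : z ∈ Submodule.span S (Set.range fun i => ε • v i)) :
    ∃ b : ι →₀ R, (∀ i, ∃ p ∈ S, b i = ε * p) ∧ linearCombination R v b = z := by
  obtain ⟨c, rfl⟩ := mem_span_range_iff_exists_finsupp.mp hz
  refine ⟨c.mapRange (fun a : S => ε * a) (mul_zero ε), fun i => ⟨c i, (c i).2, rfl⟩, ?_⟩
  rw [linearCombination_apply, sum_mapRange_index (by simp)]
  exact Finsupp.sum_congr fun i _ => by rw [mul_comm, mul_smul]; rfl

def vinvSpan {ι H : Type*} [AddCommGroup H] [Module LA H] (C : ι → H) : Submodule LAminus H :=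
  Submodule.span LAminus (Set.range fun y => (T (-1) : LA) • C y)

section BarInvariance

variable {ι H Q : Type*} [AddCommGroup H] [Module LA H] [AddCommGroup Q] [Module LA Q]
  {F : Type*} [FunLike F H H] [AddMonoidHomClass F H H] {C : ι → H} {bar : F}

theorem map_linearCombination_eq_linearCombination_invert
    (hbar_smul : ∀ (a : LA) (x : H), bar (a • x) = invert a • bar x)
    (hC_bar : ∀ y, bar (C y) = C y) (b : ι →₀ LA) :
    bar (linearCombination LA C b) =
      linearCombination LA C (b.mapRange invert (map_zero _)) := by
  rw [linearCombination_apply, linearCombination_apply, map_finsuppSum,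
    sum_mapRange_index (by simp)]
  exact Finsupp.sum_congr fun y _ => by rw [hbar_smul, hC_bar]

theorem map_eq_zero_of_bar_fixed (θ : H →ₗ[LA] Q) (hC : LinearIndependent LA C)
    (hbar_smul : ∀ (a : LA) (x : H), bar (a • x) = invert a • bar x)
    (hC_bar : ∀ y, bar (C y) = C y)
    (hker : LinearMap.ker θ ≤ Submodule.span LA (C '' {y | θ (C y) = 0})) {z : H}
    (hz : z ∈ vinvSpan C)
    (hfix : θ (bar z) = θ z) : θ z = 0 := by
  obtain ⟨b, hb, rfl⟩ := exists_linearCombination_eq_of_mem_span_smul_range LAminus hz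
  set b' := b.mapRange invert (map_zero _)
  have hdiff : linearCombination LA C (b - b') ∈ LinearMap.ker θ := by
    rw [LinearMap.mem_ker, map_sub, map_sub,
      ← map_linearCombination_eq_linearCombination_invert hbar_smul hC_bar, hfix, sub_self]
  have hvanish : ∀ y, θ (C y) ≠ 0 → b y = 0 := fun y hy => by
    have hy' : (b - b') y = 0 := (mem_supported' LA _).mp
      (hC.mem_supported_of_linearCombination_mem_span_image (hker hdiff)) y hy
    rw [Finsupp.sub_apply, mapRange_apply, sub_eq_zero] at hy'
    obtain ⟨p, hp, hbp⟩ := hb y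
    rw [hbp] at hy' ⊢
    exact T_neg_one_mul_eq_zero_of_invert_eq_self hp hy'.symm
  rw [linearCombination_apply, map_finsuppSum]
  refine Finset.sum_eq_zero fun y _ => ?_
  dsimp only
  by_cases hy : θ (C y) = 0
  · rw [map_smul, hy, smul_zero]
  · rw [hvanish y hy, zero_smul, map_zero]

end BarInvariance

section Lattices

variable {M : CoxeterMatrix B} {cs : CoxeterSystem M W} {H : Type*} [Ring H] [Algebra LA H]
  (hd : HeckeData cs H) {Q : Type*} [Ring Q] [Algebra LA Q] (θ : H →ₐ[LA] Q) {C : W → H}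

theorem vinvLatt_le_map_span
    (hC : ∀ u, ((T (-1) : LA) ^ cs.length u) • hd.Tb u - C u ∈ vinvSpan C) :
    vinvLatt cs hd θ ≤ (vinvSpan C).map (θ.toLinearMap.restrictScalars LAminus) := by
  refine Submodule.span_le.mpr ?_
  rintro _ ⟨u, -, rfl⟩
  refine ⟨(T (-1) : LA) • ((T (-1) : LA) ^ cs.length u) • hd.Tb u, ?_, ?_⟩
  · rw [← sub_add_cancel (((T (-1) : LA) ^ cs.length u) • hd.Tb u) (C u), smul_add]
    exact Submodule.add_mem _ (Submodule.smul_mem _ ⟨_, Subring.subset_closure rfl⟩ (hC u))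
      (Submodule.subset_span ⟨u, rfl⟩)
  · change θ _ = _
    rw [map_smul, map_smul, smul_smul, pow_succ']

theorem map_sub_mem_map_span
    (hC : ∀ u, ((T (-1) : LA) ^ cs.length u) • hd.Tb u - C u ∈ vinvSpan C)
    {w : W} {c : Q}
    (hc : c - ((T (-1) : LA) ^ cs.length w) • θ (hd.Tb w) ∈ vinvLatt cs hd θ) :
    θ (C w) - c ∈ (vinvSpan C).map (θ.toLinearMap.restrictScalars LAminus) := by
  have hsplit : θ (C w) - c = θ (-(((T (-1) : LA) ^ cs.length w) • hd.Tb w - C w)) -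
      (c - ((T (-1) : LA) ^ cs.length w) • θ (hd.Tb w)) := by
    rw [map_neg, map_sub, map_smul]
    abel
  rw [hsplit]
  exact sub_mem (Submodule.mem_map_of_mem (Submodule.neg_mem _ (hC w)))
    (vinvLatt_le_map_span hd θ hC hc)

end Lattices

theorem projection_property_of_kernel_spanned_general {M : CoxeterMatrix B}
    (cs : CoxeterSystem M W)
    {H : Type*} [Ring H] [Algebra LA H] (hd : HeckeData cs H)
    {Q : Type*} [Ring Q] [Algebra LA Q] (θ : H →ₐ[LA] Q)
    (barH : H ≃+* H)
    (hbar_smul : ∀ (a : LA) (x : H),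
      barH (a • x) = ((LaurentPolynomial.invert (R := ℤ)) a) • barH x)
    -- the Kazhdan--Lusztig basis
    (C : W → H)
    (hC_bar : ∀ w : W, barH (C w) = C w)
    (hC_tri : ∀ w : W, ∃ P : W →₀ LA, P w = 1 ∧ (∀ x ∈ P.support, cs.BruhatLE x w) ∧
      (∀ x : W, x ≠ w → ∃ p ∈ LAminus, P x = T (-1) * p) ∧
      C w = P.sum (fun x p => p • (((T (-1) : LA) ^ cs.length x) • (hd.Tb x : H))))
    (barTL : Q ≃+* Q) (hbarTL : ∀ x : H, barTL (θ x) = θ (barH x))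
    -- the IC basis of `TL(X)`
    (c : W → Q)
    (hc : ∀ w : W, cs.FC w → c w ∈ latt cs hd θ ∧ barTL (c w) = c w ∧
      c w - ((T (-1) : LA) ^ cs.length w) • θ (hd.Tb w) ∈ vinvLatt cs hd θ)
    -- the kernel of `θ` is spanned by the Kazhdan--Lusztig basis elements it contains
    (hspan : LinearMap.ker θ.toLinearMap =
      Submodule.span LA {x : H | (∃ w : W, x = C w) ∧ θ x = 0}) :
    ∀ w : W, cs.FC w → θ (C w) = c w := by
  choose P hP_diag hP_bruhat hP_off hCP using hC_tri
  set b := hd.Tb.isUnitSMul fun x => (isUnit_T (-1)).pow (cs.length x)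
  have hb : ∀ x, b x = ((T (-1) : LA) ^ cs.length x) • hd.Tb x :=
    Module.Basis.isUnitSMul_apply _
  have hCb : ∀ w, C w = linearCombination LA b (P w) := fun w => by
    simp only [hCP w, linearCombination_apply, hb]
  have hsupp : ∀ w x, P w x ≠ 0 → x ≠ w → cs.length x < cs.length w := fun w x hx =>
    (hP_bruhat w x (mem_support_iff.mpr hx)).length_lt
  have hbC : ∀ u, b u - C u ∈ vinvSpan C :=
    sub_mem_span_smul_of_unitriangular LAminus (Subring.subset_closure rfl) hP_diag hsupp hP_off hCb
  have hker : LinearMap.ker θ.toLinearMap ≤ Submodule.span LA (C '' {y | θ (C y) = 0}) := by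
    rw [hspan]
    refine Submodule.span_mono ?_
    rintro _ ⟨⟨y, rfl⟩, hy⟩
    exact ⟨y, hy, rfl⟩
  intro w hw
  obtain ⟨-, hc_bar, hc_vinv⟩ := hc w hw
  obtain ⟨z, hzN, hz⟩ := map_sub_mem_map_span hd θ (fun u => hb u ▸ hbC u) hc_vinv
  change θ z = _ at hz
  have hfix : θ (barH z) = θ z := by
    rw [← hbarTL, hz, map_sub, hbarTL, hC_bar, hc_bar]
  exact sub_eq_zero.mp (hz ▸ map_eq_zero_of_bar_fixed θ.toLinearMap
    (linearIndependent_of_unitriangular b hP_diag hsupp hCb) hbar_smul hC_bar hker hzN hfix)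

/-- Let `X` be any Coxeter graph.  If the kernel of the quotient map `θ : H(X) → TL(X)` is
spanned, as an `A`-module, by the Kazhdan--Lusztig basis elements `C'_w` which it contains,
then `θ(C'_w) = c_w` for all `w ∈ W_c` (the projection property holds). -/
theorem projection_property_of_kernel_spanned [DecidableEq W] {M : CoxeterMatrix B}
    (cs : CoxeterSystem M W)
    {H : Type*} [Ring H] [Algebra LA H] (hd : HeckeData cs H)
    {Q : Type*} [Ring Q] [Algebra LA Q] (θ : H →ₐ[LA] Q)
    (hsurj : Function.Surjective θ)
    (hker : ∀ x : H, θ x = 0 ↔ x ∈ TwoSidedIdeal.span (heckeJGens hd))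
    (barH : H ≃+* H)
    (hbar_smul : ∀ (a : LA) (x : H),
      barH (a • x) = ((LaurentPolynomial.invert (R := ℤ)) a) • barH x)
    (hbar_T : ∀ i : B, barH (hd.Tb (cs.simple i)) =
      (T (-2) : LA) • hd.Tb (cs.simple i) + ((T (-2) - 1 : LA)) • (hd.Tb 1 : H))
    -- the Kazhdan--Lusztig basis
    (C : W → H)
    (hC_bar : ∀ w : W, barH (C w) = C w)
    (hC_tri : ∀ w : W, ∃ P : W →₀ LA, P w = 1 ∧ (∀ x ∈ P.support, cs.BruhatLE x w) ∧
      (∀ x : W, x ≠ w → ∃ p ∈ LAminus, P x = T (-1) * p) ∧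
      C w = P.sum (fun x p => p • (((T (-1) : LA) ^ cs.length x) • (hd.Tb x : H))))
    (barTL : Q ≃+* Q) (hbarTL : ∀ x : H, barTL (θ x) = θ (barH x))
    -- the IC basis of `TL(X)`
    (c : W → Q)
    (hc : ∀ w : W, cs.FC w → c w ∈ latt cs hd θ ∧ barTL (c w) = c w ∧
      c w - ((T (-1) : LA) ^ cs.length w) • θ (hd.Tb w) ∈ vinvLatt cs hd θ)
    -- the kernel of `θ` is spanned by the Kazhdan--Lusztig basis elements it contains
    (hspan : LinearMap.ker θ.toLinearMap =
      Submodule.span LA {x : H | (∃ w : W, x = C w) ∧ θ x = 0}) :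
    ∀ w : W, cs.FC w → θ (C w) = c w :=
  projection_property_of_kernel_spanned_general cs hd θ barH hbar_smul C hC_bar hC_tri barTL hbarTL
    c hc hspan
end
end

section
/- In the generalized Temperley–Lieb algebra TL(X) of type A or B, if w ∈ W_c has a reduced expression w = u s s' (reduced product) with (ss')^3 = 1, or w = u s' s s' (reduced product) with (ss')^4 = 1, then b_w b_s is a positive integer multiple of a monomial basis element: b_{uss'} b_s = b_{us} in the first case, and b_{us'ss'} b_s = 2 b_{us's} in the second case. -/
open CoxeterSystem LaurentPolynomial

noncomputable section

variable {B : Type*} {W : Type*} [Group W]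

/-- The defining relations of the generalized Temperley--Lieb algebra `TL(X)`. -/
inductive TLRel (M : CoxeterMatrix B) : FreeAlgebra LA B → FreeAlgebra LA B → Prop
  | sq (i : B) : TLRel M (FreeAlgebra.ι LA i * FreeAlgebra.ι LA i) (qc • FreeAlgebra.ι LA i)
  | comm (i i' : B) : M i i' = 2 → TLRel M (FreeAlgebra.ι LA i * FreeAlgebra.ι LA i')
      (FreeAlgebra.ι LA i' * FreeAlgebra.ι LA i)
  | braid3 (i i' : B) : M i i' = 3 → TLRel M
      (FreeAlgebra.ι LA i * FreeAlgebra.ι LA i' * FreeAlgebra.ι LA i) (FreeAlgebra.ι LA i)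
  | braid4 (i i' : B) : M i i' = 4 → TLRel M
      (FreeAlgebra.ι LA i * FreeAlgebra.ι LA i' * FreeAlgebra.ι LA i * FreeAlgebra.ι LA i')
      (2 * (FreeAlgebra.ι LA i * FreeAlgebra.ι LA i'))

/-- The generalized Temperley--Lieb algebra `TL(X)` as an `A`-algebra. -/
abbrev TL (M : CoxeterMatrix B) := RingQuot (TLRel M)

/-- The generator `b_s` of `TL(X)`. -/
def bgen (M : CoxeterMatrix B) (i : B) : TL M :=
  RingQuot.mkAlgHom LA (TLRel M) (FreeAlgebra.ι LA i)

/-- The product `b_{s_1} b_{s_2} ⋯ b_{s_n}` over a word; for a reduced word of a fully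
commutative element this is the monomial basis element `b_w`. -/
def bprod (M : CoxeterMatrix B) (ω : List B) : TL M := (ω.map (bgen M)).prod

/-- In `TL(X)` of type `A` or `B`: if `w ∈ W_c` has a reduced factorization `w = u s s'` with
`(ss')³ = 1` then `b_{uss'} b_s = b_{us}`, and if `w = u s' s s'` reduced with `(ss')⁴ = 1`
then `b_{us'ss'} b_s = 2 b_{us's}`; in particular `b_w b_s` is a positive integer multiple of
a monomial basis element.  (`b`-elements are expressed via `bprod` over reduced words, and as
in the paper `us`, resp. `us's`, is assumed fully commutative.) -/
theorem bprod_mul_bgen_braid_cases {n : ℕ} {M : CoxeterMatrix (Fin n)}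
    (hM : M = CoxeterMatrix.Aₙ n ∨ M = CoxeterMatrix.Bₙ n)
    (cs : CoxeterSystem M W) (u : W) (s s' : Fin n)
    (ωu : List (Fin n)) (hωu : cs.IsReduced ωu) (hu : cs.wordProd ωu = u) :
    (M s s' = 3 → cs.IsReduced (ωu ++ [s, s']) →
      cs.FC (cs.wordProd (ωu ++ [s, s'])) → cs.FC (u * cs.simple s) →
      bprod M (ωu ++ [s, s']) * bgen M s = bprod M (ωu ++ [s])) ∧
    (M s s' = 4 → cs.IsReduced (ωu ++ [s', s, s']) →
      cs.FC (cs.wordProd (ωu ++ [s', s, s'])) → cs.FC (u * cs.simple s' * cs.simple s) →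
      bprod M (ωu ++ [s', s, s']) * bgen M s = 2 • bprod M (ωu ++ [s', s])) := by
  have key : ∀ a b : FreeAlgebra LA (Fin n), TLRel M a b →
      RingQuot.mkAlgHom LA (TLRel M) a = RingQuot.mkAlgHom LA (TLRel M) b :=
    fun a b h => RingQuot.mkAlgHom_rel LA h
  constructor
  · intro h3 _ _ _
    have := key _ _ (TLRel.braid3 s s' h3)
    simp only [map_mul] at this
    simp only [bprod, List.map_append, List.prod_append, List.map_cons, List.map_nil,
      List.prod_cons, List.prod_nil, mul_one, bgen, mul_assoc] at this ⊢
    rw [this]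
  · intro h4 _ _ _
    have h4' : M s' s = 4 := by rw [M.symmetric s' s]; exact h4
    have := key _ _ (TLRel.braid4 s' s h4')
    simp only [map_mul] at this
    simp only [bprod, List.map_append, List.prod_append, List.map_cons, List.map_nil,
      List.prod_cons, List.prod_nil, mul_one, bgen, mul_assoc, two_smul, two_mul] at this ⊢
    rw [this, map_ofNat, two_mul, mul_add]
end
end

section
/- Let (W,S) be a Coxeter system, suppose a reduced expression s_1···s_n for x is transformed by a sequence of commutation moves into the reduced expression s_{τ(1)}···s_{τ(n)} (where τ is the permutation tracking positions). If s_{τ(i)} and s_{τ(j)} do not commute and τ(i) < τ(j), then i < j. -/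
open CoxeterSystem LaurentPolynomial

noncomputable section

variable {B : Type*} {W : Type*} [Group W]

/-- Suppose a reduced expression `ω = s_1 ⋯ s_n` is transformed by a sequence of commutation
moves into the reduced expression whose `i`-th letter is `s_{τ(i)}` (each single move composes
`τ` with an adjacent transposition `swap k (k+1)` allowed when the two letters currently in
positions `k`, `k+1` commute).  If `s_{τ(i)}` and `s_{τ(j)}` do not commute and `τ(i) < τ(j)`,
then `i < j`. -/
theorem commutation_moves_preserve_noncommuting_order {M : CoxeterMatrix B}
    (cs : CoxeterSystem M W) (ω : List B) (hred : cs.IsReduced ω)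
    (τ : Equiv.Perm (Fin ω.length))
    (hτ : Relation.ReflTransGen
      (fun σ σ' => ∃ (k : ℕ) (h : k + 1 < ω.length),
        Commute (cs.simple (ω.get (σ ⟨k, Nat.lt_of_succ_lt h⟩)))
          (cs.simple (ω.get (σ ⟨k + 1, h⟩))) ∧
        σ' = σ * Equiv.swap ⟨k, Nat.lt_of_succ_lt h⟩ ⟨k + 1, h⟩)
      1 τ)
    (i j : Fin ω.length)
    (hnc : ¬ Commute (cs.simple (ω.get (τ i))) (cs.simple (ω.get (τ j))))
    (hlt : τ i < τ j) :
    i < j := by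
  induction hτ generalizing i j with
  | refl => simpa using hlt
  | tail _ h ih =>
    obtain ⟨k, hk, hcomm, rfl⟩ := h
    set a : Fin ω.length := ⟨k, Nat.lt_of_succ_lt hk⟩ with ha
    set b : Fin ω.length := ⟨k + 1, hk⟩ with hb
    simp only [Equiv.Perm.mul_apply] at hnc hlt
    have hij := ih _ _ hnc hlt
    have hab : a ≠ b := by simp [ha, hb, Fin.ext_iff]
    by_cases hia : i = a
    · subst hia
      rw [Equiv.swap_apply_left] at hij
      by_cases hja : j = a
      · subst hja; rw [Equiv.swap_apply_left] at hij; exact absurd hij (lt_irrefl _)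
      · by_cases hjb : j = b
        · subst hjb
          rw [Equiv.swap_apply_right] at hij
          exact absurd hij (by simp [ha, hb, Fin.lt_def])
        · rw [Equiv.swap_apply_of_ne_of_ne hja hjb] at hij
          have h1 : (b : Fin ω.length).val < j.val := hij
          simp only [ha, hb, Fin.lt_def, Fin.val_mk] at h1 ⊢
          omega
    · by_cases hib : i = b
      · subst hib
        rw [Equiv.swap_apply_right] at hij
        by_cases hja : j = a
        · subst hja
          rw [Equiv.swap_apply_left] at hnc
          rw [Equiv.swap_apply_right] at hnc
          exact absurd hcomm hnc
        · by_cases hjb : j = b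
          · subst hjb; rw [Equiv.swap_apply_right] at hij; exact absurd hij (lt_irrefl _)
          · rw [Equiv.swap_apply_of_ne_of_ne hja hjb] at hij
            have h1 : (a : Fin ω.length).val < j.val := hij
            have h2 : j.val ≠ k + 1 := fun hc => hjb (Fin.ext hc)
            simp only [ha, hb, Fin.lt_def, Fin.val_mk] at h1 ⊢
            omega
      · rw [Equiv.swap_apply_of_ne_of_ne hia hib] at hij
        by_cases hja : j = a
        · subst hja
          rw [Equiv.swap_apply_left] at hij
          have h1 : i.val < (b : Fin ω.length).val := hij
          have h2 : i.val ≠ k := fun hc => hia (Fin.ext hc)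
          simp only [ha, hb, Fin.lt_def, Fin.val_mk] at h1 ⊢
          omega
        · by_cases hjb : j = b
          · subst hjb
            rw [Equiv.swap_apply_right] at hij
            have h1 : i.val < (a : Fin ω.length).val := hij
            simp only [ha, hb, Fin.lt_def, Fin.val_mk] at h1 ⊢
            omega
          · rw [Equiv.swap_apply_of_ne_of_ne hja hjb] at hij
            exact hij
end
end

section
/- In a Coxeter group W of type A or B, for any fully commutative w ∈ W_c and generator s ∈ S with a reduced expression of w ending in some s' that does not commute with s, one has ℓ(ws) > ℓ(w). -/
open CoxeterSystem LaurentPolynomial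

noncomputable section

variable {B : Type*} {W : Type*} [Group W]

/-!
If `ℓ(ws) < ℓ(w)`, then `s` and `s'` are both right descents of `w`. Two right descents `i, i'`
force a length-additive factorization `w = x · (⋯ i' i i')` whose alternating suffix has length
`m = ord(sᵢ sᵢ')`: while the suffix has length `k < m` and ends in `i'`, the reflection `sᵢ` does
not occur in its right inversion sequence, so by the exchange condition the letter that `sᵢ`
deletes lies in `x`, and the suffix grows by `i`. In types A and B every bond is at most 4, so for
non-commuting `s, s'` this order is the bond `M(s, s') ∈ {3, 4}` and `w` is complex.

The exchange condition comes from Tits' action of `W` on `W × ℤ/2`: the parity of the number of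
occurrences of a reflection in the right inversion sequence of a word depends only on the
product of the word.
-/

namespace CoxeterSystem

variable {M : CoxeterMatrix B} (cs : CoxeterSystem M W)

local prefix:100 "s" => cs.simple
local prefix:100 "π" => cs.wordProd
local prefix:100 "ℓ" => cs.length
local prefix:100 "ris" => cs.rightInvSeq

theorem simple_mul_simple_inv (i i' : B) : (s i * s i')⁻¹ = s i' * s i := by
  simp [inv_simple]

theorem simple_mul_zpow_simple_mul_simple (i i' : B) (z : ℤ) :
    s i' * (s i * s i') ^ z = (s i * s i') ^ (-z) * s i' := by
  have hconj : s i' * (s i * s i') * (s i')⁻¹ = (s i * s i')⁻¹ := by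
    rw [simple_mul_simple_inv, inv_simple, ← mul_assoc, simple_mul_simple_cancel_right]
  rw [zpow_neg, ← inv_zpow, ← hconj, conj_zpow, inv_mul_cancel_right]

theorem commute_simple_of_sq_eq_one {i i' : B} (h : (s i * s i') ^ 2 = 1) :
    Commute (s i) (s i') := by
  rwa [sq, mul_eq_one_iff_eq_inv, simple_mul_simple_inv] at h

theorem two_lt_orderOf_simple_mul_simple {i i' : B} (hM : M i i' ≠ 0)
    (hnc : ¬ Commute (s i) (s i')) : 2 < orderOf (s i * s i') := by
  have hdvd : orderOf (s i * s i') ∣ M i i' :=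
    orderOf_dvd_of_pow_eq_one (cs.simple_mul_simple_pow i i')
  by_contra! hle
  interval_cases h : orderOf (s i * s i')
  · exact hM (Nat.eq_zero_of_zero_dvd hdvd)
  · exact hnc (cs.commute_simple_of_sq_eq_one (by rw [orderOf_eq_one_iff.mp h, one_pow]))
  · exact hnc (cs.commute_simple_of_sq_eq_one (h ▸ pow_orderOf_eq_one _))

/- The equality holds in every Coxeter system, but proving it needs the geometric representation;
for bonds at most 4, divisibility suffices. -/
theorem orderOf_simple_mul_simple_of_le_four {i i' : B} (hM : M i i' ≠ 0) (hM4 : M i i' ≤ 4)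
    (hnc : ¬ Commute (s i) (s i')) : orderOf (s i * s i') = M i i' := by
  have hdvd : orderOf (s i * s i') ∣ M i i' :=
    orderOf_dvd_of_pow_eq_one (cs.simple_mul_simple_pow i i')
  have h2 := cs.two_lt_orderOf_simple_mul_simple hM hnc
  have hle := Nat.le_of_dvd (Nat.pos_of_ne_zero hM) hdvd
  interval_cases h : M i i' <;> interval_cases orderOf (s i * s i') <;> simp_all

theorem rightInvSeq_alternatingWord (i i' : B) (k : ℕ) :
    ris (alternatingWord i i' k) =
      (List.range k).map fun j : ℕ => (s i * s i') ^ ((j : ℤ) + 1 - k) * s i' := by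
  induction k generalizing i i' with
  | zero => rfl
  | succ k ih =>
    rw [alternatingWord_succ, rightInvSeq_concat, ih, List.range_succ, List.map_append,
      List.map_map, List.concat_eq_append]
    congr 1
    · refine List.map_congr_left fun j _ => ?_
      rw [Function.comp_apply, MulAut.conj_apply, inv_simple, ← cs.simple_mul_simple_inv i i',
        inv_zpow', ← mul_assoc, simple_mul_zpow_simple_mul_simple, mul_assoc _ (s i'),
        ← cs.simple_mul_simple_inv i i', neg_neg, ← zpow_sub_one]
      push_cast
      ring_nf
    · simp

theorem simple_notMem_rightInvSeq_alternatingWord {i i' : B} {k : ℕ}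
    (hk : k < orderOf (s i * s i')) : s i ∉ ris (alternatingWord i i' k) := by
  rw [rightInvSeq_alternatingWord, List.mem_map]
  rintro ⟨j, hj, h⟩
  rw [List.mem_range] at hj
  have hpow : (s i * s i') ^ ((j : ℤ) + 1 - k) = s i * s i' := by
    rw [eq_mul_inv_of_mul_eq h, inv_simple]
  refine pow_ne_one_of_lt_orderOf (x := s i * s i') (n := k - j) (by omega) (by omega) ?_
  rw [← zpow_natCast, show ((k - j : ℕ) : ℤ) = 1 - ((j : ℤ) + 1 - k) by omega, zpow_sub, hpow,
    zpow_one, mul_inv_cancel]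

theorem even_count_rightInvSeq_alternatingWord_two_mul [DecidableEq W] (i i' : B) (x : W) :
    Even ((ris (alternatingWord i i' (2 * M i i'))).count x) := by
  rw [rightInvSeq_alternatingWord, two_mul, List.range_add, List.map_append, List.map_map,
    List.count_append]
  convert Even.add_self _ using 4
  funext j
  rw [Function.comp_apply, Nat.cast_add, add_assoc, add_sub_assoc, zpow_add, zpow_natCast,
    simple_mul_simple_pow, one_mul]

theorem wordProd_alternatingWord_two_mul (i i' : B) :
    π (alternatingWord i i' (2 * M i i')) = 1 := by
  simp [prod_alternatingWord_eq_mul_pow]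

theorem prod_map_alternatingWord_two_mul {G : Type*} [Monoid G] (f : B → G) (i i' : B) (k : ℕ) :
    ((alternatingWord i i' (2 * k)).map f).prod = (f i * f i') ^ k := by
  induction k with
  | zero => simp [alternatingWord]
  | succ k ih =>
    have hodd : ¬ Even (2 * k + 1) := by simp [parity_simps]
    rw [show 2 * (k + 1) = 2 * k + 1 + 1 by ring, alternatingWord_succ', alternatingWord_succ',
      if_neg hodd, if_pos (even_two_mul k), List.map_cons, List.map_cons, List.prod_cons,
      List.prod_cons, ih, pow_succ', mul_assoc]

section ReflectionPerm

variable [DecidableEq W]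

/-- Tits' action of `sᵢ` on pairs (element, sign), flipping the sign exactly at the reflection
`sᵢ`. It is defined on all of `W` so that no subtype of reflections is needed. -/
def reflectionPerm (i : B) : Equiv.Perm (W × ZMod 2) :=
  Function.Involutive.toPerm (fun p => (s i * p.1 * s i, p.2 + if p.1 = s i then 1 else 0)) <| by
    rintro ⟨x, e⟩
    have hx : s i * x * s i = s i ↔ x = s i := by
      rw [mul_eq_right, mul_eq_one_iff_eq_inv', inv_simple]
    simp only [Prod.mk.injEq, ← mul_assoc, simple_mul_simple_self, one_mul,
      simple_mul_simple_cancel_right, hx, true_and]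
    split_ifs <;> simp [add_assoc, CharTwo.add_self_eq_zero]

theorem reflectionPerm_apply (i : B) (p : W × ZMod 2) :
    cs.reflectionPerm i p = (s i * p.1 * s i, p.2 + if p.1 = s i then 1 else 0) := rfl

theorem prod_map_reflectionPerm_apply (ω : List B) (p : W × ZMod 2) :
    (ω.map cs.reflectionPerm).prod p = (π ω * p.1 * (π ω)⁻¹, p.2 + (ris ω).count p.1) := by
  induction ω generalizing p with
  | nil => simp
  | cons i ω ih =>
    have hconj : π ω * p.1 * (π ω)⁻¹ = s i ↔ (π ω)⁻¹ * s i * π ω = p.1 := by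
      constructor <;> intro h <;> [rw [← h]; rw [← h]] <;> group
    rw [List.map_cons, List.prod_cons, Equiv.Perm.mul_apply, ih, reflectionPerm_apply]
    refine Prod.ext ?_ ?_
    · simp [wordProd_cons, mul_assoc]
    · simp only [rightInvSeq, List.count_cons, beq_iff_eq, if_congr hconj rfl rfl]
      push_cast
      ring

theorem isLiftable_reflectionPerm : M.IsLiftable cs.reflectionPerm := by
  intro i i'
  rw [← prod_map_alternatingWord_two_mul]
  ext p
  · simp [prod_map_reflectionPerm_apply, wordProd_alternatingWord_two_mul]
  · simp [prod_map_reflectionPerm_apply, ZMod.natCast_eq_zero_iff_even.mpr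
      (cs.even_count_rightInvSeq_alternatingWord_two_mul i i' p.1)]

theorem prod_map_reflectionPerm_eq_of_wordProd_eq {ω ω' : List B} (h : π ω = π ω') :
    (ω.map cs.reflectionPerm).prod = (ω'.map cs.reflectionPerm).prod := by
  have hlift (ω : List B) : cs.lift ⟨_, cs.isLiftable_reflectionPerm⟩ (π ω) =
      (ω.map cs.reflectionPerm).prod := by
    rw [wordProd, map_list_prod, List.map_map]
    exact congrArg _ (List.map_congr_left fun i _ => cs.lift_apply_simple _ i)
  rw [← hlift, ← hlift, h]

theorem natCast_count_rightInvSeq_eq_of_wordProd_eq {ω ω' : List B} (h : π ω = π ω') (x : W) :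
    ((ris ω).count x : ZMod 2) = (ris ω').count x := by
  simpa [prod_map_reflectionPerm_apply] using
    congrArg (fun f : Equiv.Perm (W × ZMod 2) => (f (x, 0)).2)
      (cs.prod_map_reflectionPerm_eq_of_wordProd_eq h)

end ReflectionPerm

theorem simple_mem_rightInvSeq_of_isRightDescent {ω : List B} {i : B}
    (hi : cs.IsRightDescent (π ω) i) : s i ∈ ris ω := by
  classical
  obtain ⟨κ, hκ, hκω⟩ := cs.exists_isReduced (π ω * s i)
  have hprod : π (κ.concat i) = π ω := by
    rw [wordProd_concat, ← hκω, simple_mul_simple_cancel_right]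
  have hred : cs.IsReduced (κ.concat i) := by
    rw [IsReduced, hprod, List.length_concat, ← hκ, ← hκω]
    exact ((cs.isRightDescent_iff).mp hi).symm
  have hcount : (ris (κ.concat i)).count (s i) = 1 :=
    List.count_eq_one_of_mem hred.nodup_rightInvSeq (by rw [rightInvSeq_concat]; simp)
  have hparity := cs.natCast_count_rightInvSeq_eq_of_wordProd_eq hprod (s i)
  rw [hcount, Nat.cast_one] at hparity
  refine List.count_pos_iff.mp (Nat.pos_of_ne_zero fun h0 => ?_)
  rw [h0, Nat.cast_zero] at hparity
  exact one_ne_zero hparity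

theorem rightInvSeq_append (ω ω' : List B) :
    ris (ω ++ ω') = (ris ω).map (MulAut.conj (π ω')⁻¹) ++ ris ω' := by
  induction ω with
  | nil => simp
  | cons i ω ih =>
    simp only [List.cons_append, rightInvSeq, ih, List.map_cons, MulAut.conj_apply, inv_inv,
      wordProd_append, mul_inv_rev, mul_assoc]

theorem length_wordProd_mul_lt_of_mem_rightInvSeq {ω : List B} {t : W} (ht : t ∈ ris ω) :
    ℓ (π ω * t) < ω.length := by
  obtain ⟨j, hj, rfl⟩ := List.getElem_of_mem ht
  rw [length_rightInvSeq] at hj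
  rw [← List.getD_eq_getElem _ 1, wordProd_mul_getD_rightInvSeq]
  calc ℓ (π (ω.eraseIdx j)) ≤ (ω.eraseIdx j).length := cs.length_wordProd_le _
    _ < ω.length := by rw [List.length_eraseIdx_of_lt hj]; omega

theorem exists_alternatingWord_succ_suffix {w x : W} {i i' : B} {k : ℕ}
    (hk : k < orderOf (s i * s i')) (hw : w = x * π (alternatingWord i i' k))
    (hlen : ℓ w = ℓ x + k) (hi : cs.IsRightDescent w i) :
    ∃ x', w = x' * π (alternatingWord i' i (k + 1)) ∧ ℓ w = ℓ x' + (k + 1) := by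
  obtain ⟨ξ, hξ, rfl⟩ := cs.exists_isReduced x
  have hmem : s i ∈ ris (ξ ++ alternatingWord i i' k) :=
    cs.simple_mem_rightInvSeq_of_isRightDescent (by rwa [wordProd_append, ← hw])
  rw [rightInvSeq_append, List.mem_append, List.mem_map] at hmem
  -- `sᵢ` is conjugate to an inversion `t` of `ξ`; deleting `t` from `ξ` appends `i` to the suffix.
  obtain ⟨t, ht, hti⟩ := hmem.resolve_right (cs.simple_notMem_rightInvSeq_alternatingWord hk)
  have htt : t * t = 1 := (cs.isReflection_of_mem_rightInvSeq ξ ht).mul_self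
  have hw' : w = π ξ * t * π (alternatingWord i' i (k + 1)) := by
    rw [alternatingWord_succ, wordProd_concat, hw, ← hti, MulAut.conj_apply, inv_inv]
    simp only [mul_assoc, mul_inv_cancel_left]
    rw [← mul_assoc t t, htt, one_mul]
  refine ⟨π ξ * t, hw', le_antisymm ?_ ?_⟩
  · calc ℓ w ≤ ℓ (π ξ * t) + ℓ (π (alternatingWord i' i (k + 1))) := hw' ▸ cs.length_mul_le _ _
      _ ≤ ℓ (π ξ * t) + (k + 1) := by
        grw [cs.length_wordProd_le, length_alternatingWord]
  · have hlt := cs.length_wordProd_mul_lt_of_mem_rightInvSeq ht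
    rw [← hξ] at hlt
    omega

theorem exists_alternatingWord_suffix {w : W} {i i' : B} (hi : cs.IsRightDescent w i)
    (hi' : cs.IsRightDescent w i') {k : ℕ} (hk : k ≤ orderOf (s i * s i')) :
    ∃ x, (w = x * π (alternatingWord i i' k) ∨ w = x * π (alternatingWord i' i k)) ∧
      ℓ w = ℓ x + k := by
  induction k with
  | zero => exact ⟨w, Or.inl (by simp [alternatingWord]), rfl⟩
  | succ k ih =>
    obtain ⟨x, hw | hw, hlen⟩ := ih (by omega)
    · obtain ⟨x', hw', hlen'⟩ := cs.exists_alternatingWord_succ_suffix (by omega) hw hlen hi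
      exact ⟨x', Or.inr hw', hlen'⟩
    · have hk' : k < orderOf (s i' * s i) := by
        rw [← simple_mul_simple_inv, orderOf_inv]
        omega
      obtain ⟨x', hw', hlen'⟩ := cs.exists_alternatingWord_succ_suffix hk' hw hlen hi'
      exact ⟨x', Or.inl hw', hlen'⟩

theorem isComplexElt_of_isRightDescent {w : W} {i i' : B} (h3 : 3 ≤ M i i')
    (hord : orderOf (s i * s i') = M i i') (hi : cs.IsRightDescent w i)
    (hi' : cs.IsRightDescent w i') : cs.IsComplexElt w := by
  obtain ⟨x, hw | hw, hlen⟩ := cs.exists_alternatingWord_suffix hi hi' hord.ge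
  · exact ⟨x, 1, i, i', h3, by rw [mul_one, hw], by rw [length_one, add_zero, hlen]⟩
  · rw [M.symmetric] at h3 hlen hw
    exact ⟨x, 1, i', i, h3, by rw [mul_one, hw], by rw [length_one, add_zero, hlen]⟩

end CoxeterSystem

theorem CoxeterMatrix.A_apply_mem_Icc (n : ℕ) (i j : Fin n) :
    CoxeterMatrix.A n i j ∈ Set.Icc 1 3 := by
  simp only [CoxeterMatrix.A, Matrix.of_apply]
  split_ifs <;> simp

theorem CoxeterMatrix.B_apply_mem_Icc (n : ℕ) (i j : Fin n) :
    CoxeterMatrix.B n i j ∈ Set.Icc 1 4 := by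
  simp only [CoxeterMatrix.B, Matrix.of_apply]
  split_ifs <;> simp

/-- In a Coxeter group of type `A` or `B`, if `w` is fully commutative and has a reduced
expression ending in a generator `s'` which does not commute with `s`, then `ℓ(ws) > ℓ(w)`. -/
theorem length_mul_gt_of_fc_of_ends_noncommuting {n : ℕ} {M : CoxeterMatrix (Fin n)}
    (hM : M = CoxeterMatrix.Aₙ n ∨ M = CoxeterMatrix.Bₙ n)
    (cs : CoxeterSystem M W) (w u : W) (s s' : Fin n)
    (hfc : cs.FC w)
    (hw : w = u * cs.simple s') (hlen : cs.length w = cs.length u + 1)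
    (hnc : ¬ Commute (cs.simple s) (cs.simple s')) :
    cs.length w < cs.length (w * cs.simple s) := by
  have hbond : M s s' ∈ Set.Icc 1 4 := by
    rcases hM with rfl | rfl
    · exact Set.Icc_subset_Icc_right (by norm_num) (CoxeterMatrix.A_apply_mem_Icc n s s')
    · exact CoxeterMatrix.B_apply_mem_Icc n s s'
  have hM0 : M s s' ≠ 0 := Nat.one_le_iff_ne_zero.mp hbond.1
  have hord := cs.orderOf_simple_mul_simple_of_le_four hM0 hbond.2 hnc
  have hs' : cs.IsRightDescent w s' := by
    rw [CoxeterSystem.isRightDescent_iff, hw, cs.simple_mul_simple_cancel_right, ← hw, hlen]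
  by_contra! hle
  have hs : cs.IsRightDescent w s := by
    by_contra hs
    have := cs.not_isRightDescent_iff.mp hs
    omega
  exact hfc (cs.isComplexElt_of_isRightDescent
    (hord ▸ cs.two_lt_orderOf_simple_mul_simple hM0 hnc) hord hs hs')
end
end
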